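/- Let μ, κ, λ, σ be four infinite cardinals such that cf(λ) < μ = cf(μ) < κ = cf(κ) < λ ≤ σ ≤ u(κ, λ). Suppose that 𝒜_{κ,λ}(μ, u(κ, λ)) holds. Then the ideals Nμ-S_{κ,λ} and Nμ-S_{κ,σ} are isomorphic. -/

import Mathlib

open Cardinal Set

namespace Paper

universe u v

/-- `J` is an ideal on the set `X`: a nonempty collection of subsets of `X` not containing
`X` itself, closed under subsets and pairwise unions. -/
def IsIdealOn {α : Type u} (X : Set α) (J : Set (Set α)) : Prop :=
  J.Nonempty ∧ (∀ A ∈ J, A ⊆ X) ∧ X ∉ J ∧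
    (∀ A ∈ J, ∀ B, B ⊆ A → B ∈ J) ∧ (∀ A ∈ J, ∀ B ∈ J, A ∪ B ∈ J)

/-- `J* = {A ⊆ X : X \ A ∈ J}`, the dual filter of the ideal `J` on `X`. -/
def dualOn {α : Type u} (X : Set α) (J : Set (Set α)) : Set (Set α) :=
  {A | A ⊆ X ∧ X \ A ∈ J}

/-- `J⁺ = P(X) \ J`. -/
def plusOn {α : Type u} (X : Set α) (J : Set (Set α)) : Set (Set α) :=
  {A | A ⊆ X ∧ A ∉ J}

/-- `J | A = {B ⊆ X : B ∩ A ∈ J}`. -/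
def restrictOn {α : Type u} (X : Set α) (J : Set (Set α)) (A : Set α) : Set (Set α) :=
  {B | B ⊆ X ∧ B ∩ A ∈ J}

/-- The ideals `K1` on `X1` and `K2` on `X2` are isomorphic: there are `W1 ∈ K1*`, `W2 ∈ K2*`
and a bijection `k : W1 → W2` with `K1* ∩ P(W1) = {D ⊆ W1 : k '' D ∈ K2*}`. -/
def IdealIso {α : Type u} {β : Type v} (X1 : Set α) (K1 : Set (Set α))
    (X2 : Set β) (K2 : Set (Set β)) : Prop :=
  ∃ W1 ∈ dualOn X1 K1, ∃ W2 ∈ dualOn X2 K2, ∃ k : α → β,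
    Set.BijOn k W1 W2 ∧ ∀ D ⊆ W1, (D ∈ dualOn X1 K1 ↔ k '' D ∈ dualOn X2 K2)

/-- The ideal `J` (on a set of ordinals) is `ρ`-complete: the union of fewer than `ρ`
members of `J` belongs to `J`. -/
def IsComplete (ρ : Cardinal.{0}) (J : Set (Set Ordinal)) : Prop :=
  ∀ Q : Set (Set Ordinal), Q ⊆ J → #Q < Cardinal.lift.{1} ρ → ⋃₀ Q ∈ J

/-- `P_χ(λ)`, realized as the collection of subsets of the ordinal interval `[0, ord λ)`
of cardinality `< χ`. -/
def Pk (χ lam : Cardinal.{0}) : Set (Set Ordinal) :=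
  {a | (∀ x ∈ a, x < lam.ord) ∧ #a < Cardinal.lift.{1} χ}

/-- `S` is cofinal in `(P_χ(λ), ⊆)`. -/
def IsCofinalIn (S : Set (Set Ordinal)) (χ lam : Cardinal.{0}) : Prop :=
  ∀ a ∈ Pk χ lam, ∃ b ∈ S, a ⊆ b

/-- `u(κ, λ)`: the least cardinality of a cofinal subset of `(P_κ(λ), ⊆)`. -/
noncomputable def uu (κ lam : Cardinal.{0}) : Cardinal.{0} :=
  sInf {c : Cardinal.{0} | ∃ S ⊆ Pk κ lam, IsCofinalIn S κ lam ∧ #S = Cardinal.lift.{1} c}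

/-- A `(τ,λ,π)`-sequence: an injective sequence `⟨y_β : β < π⟩` of elements of `P_τ(λ)`
with `y_β = {β}` for every `β < λ`. -/
def IsTLPSeq (τ lam π : Cardinal.{0}) (y : Ordinal → Set Ordinal) : Prop :=
  (∀ β < π.ord, (∀ x ∈ y β, x < lam.ord) ∧ #(y β) < Cardinal.lift.{1} τ) ∧
  (∀ β < lam.ord, y β = {β}) ∧
  (∀ β < π.ord, ∀ γ < π.ord, y β = y γ → β = γ)

/-- `f_⃗y(a) = {β < π : y_β ⊆ a}`. -/
def fSeq (π : Cardinal.{0}) (y : Ordinal → Set Ordinal) (a : Set Ordinal) : Set Ordinal :=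
  {β | β < π.ord ∧ y β ⊆ a}

/-- An `𝒜_{κ,λ}(τ,π)`-sequence: a `(τ,λ,π)`-sequence with `|f_⃗y(a)| < κ` for all
`a ∈ P_κ(λ)`. -/
def ASeq (κ lam τ π : Cardinal.{0}) (y : Ordinal → Set Ordinal) : Prop :=
  IsTLPSeq τ lam π y ∧ ∀ a ∈ Pk κ lam, #(fSeq π y a) < Cardinal.lift.{1} κ

/-- `𝒜_{κ,λ}(τ,π)` asserts the existence of an `𝒜_{κ,λ}(τ,π)`-sequence. -/
def A (κ lam τ π : Cardinal.{0}) : Prop := ∃ y, ASeq κ lam τ π y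

/-- The noncofinal ideal `I_{κ,σ}` on `P_κ(σ)`. -/
def Icof (κ σ : Cardinal.{0}) : Set (Set (Set Ordinal)) :=
  {A | A ⊆ Pk κ σ ∧ ¬ IsCofinalIn A κ σ}

/-- `A` is `μ`-closed: the union of any `⊂`-increasing `μ`-sequence from `A` is in `A`. -/
def MuClosed (μ : Cardinal.{0}) (A : Set (Set Ordinal)) : Prop :=
  ∀ s : Ordinal → Set Ordinal,
    (∀ i < μ.ord, s i ∈ A) →
    (∀ i j, i < j → j < μ.ord → s i ⊂ s j) →
    (⋃ i ∈ Set.Iio μ.ord, s i) ∈ A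

/-- A `μ`-club of `P_κ(σ)`: a `μ`-closed cofinal subset of `P_κ(σ)`. -/
def MuClub (μ κ σ : Cardinal.{0}) (C : Set (Set Ordinal)) : Prop :=
  C ⊆ Pk κ σ ∧ MuClosed μ C ∧ IsCofinalIn C κ σ

/-- The ideal `Nμ-S_{κ,σ}` of all subsets of `P_κ(σ)` disjoint from some `μ`-club. -/
def NmuS (μ κ σ : Cardinal.{0}) : Set (Set (Set Ordinal)) :=
  {B | B ⊆ Pk κ σ ∧ ∃ C, MuClub μ κ σ C ∧ B ∩ C = ∅}

/-- `f <_I g` : `{a ∈ A : f(a) ≥ g(a)} ∈ I`. -/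
def ltI (A : Set Cardinal.{0}) (I : Set (Set Cardinal.{0}))
    (f g : Cardinal.{0} → Ordinal) : Prop :=
  {a | a ∈ A ∧ g a ≤ f a} ∈ I

/-- `f` is a member of `∏_{a ∈ A} a`. -/
def inProd (A : Set Cardinal.{0}) (f : Cardinal.{0} → Ordinal) : Prop :=
  ∀ a ∈ A, f a < a.ord

/-- `tcf (∏ A / I) = π`: there is a `<_I`-increasing sequence of length `π`
cofinal in `(∏ A, <_I)`. -/
def IsTcf (A : Set Cardinal.{0}) (I : Set (Set Cardinal.{0})) (π : Cardinal.{0}) : Prop :=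
  ∃ F : Ordinal → Cardinal.{0} → Ordinal,
    (∀ α < π.ord, inProd A (F α)) ∧
    (∀ α β, α < β → β < π.ord → ltI A I (F α) (F β)) ∧
    (∀ g, inProd A g → ∃ α < π.ord, ltI A I g (F α))

/-- The set of cardinals `π` with `π = tcf (∏ A / I)` for some set `A` of regular cardinals
with `sup A = θ`, `|A| = cf θ < min A`, and some ideal `I` on `A` containing all the sets
`A ∩ a` for `a ∈ A`. -/
def ppSet (θ : Cardinal.{0}) : Set Cardinal.{0} :=
  {π | ∃ (A : Set Cardinal.{0}) (I : Set (Set Cardinal.{0})),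
    A.Nonempty ∧ (∀ a ∈ A, a.IsRegular) ∧ (∀ a ∈ A, a < θ) ∧ sSup A = θ ∧
    #A = Cardinal.lift.{1} θ.ord.cof ∧ (∀ a ∈ A, θ.ord.cof < a) ∧
    IsIdealOn A I ∧ (∀ a ∈ A, {b | b ∈ A ∧ b < a} ∈ I) ∧ IsTcf A I π}

/-- `pp θ`, the supremum of the possible cofinalities. -/
noncomputable def pp (θ : Cardinal.{0}) : Cardinal.{0} := sSup (ppSet θ)

/-- `c` is a limit cardinal: `c` is infinite and closed under cardinal successor. -/
def IsLimitCard (c : Cardinal.{0}) : Prop := ℵ₀ ≤ c ∧ ∀ d < c, Order.succ d < c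

/-- `ρ(τ)`: the largest limit cardinal `≤ τ`. -/
noncomputable def rho (τ : Cardinal.{0}) : Cardinal.{0} :=
  sSup {c | c ≤ τ ∧ IsLimitCard c}

/-- The index `β` such that `κ = ℵ_β` (for `κ` infinite). -/
noncomputable def alephIdx (κ : Cardinal.{0}) : Ordinal :=
  sInf {β | κ ≤ Cardinal.aleph β}

/-- `κ^{+α}`, the `α`-th iterated successor of `κ`: `ℵ_{β+α}` where `κ = ℵ_β`. -/
noncomputable def iterSucc (κ : Cardinal.{0}) (α : Ordinal) : Cardinal.{0} :=
  Cardinal.aleph (alephIdx κ + α)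

/-- `θ` is a fixed point of the aleph function: `θ = ℵ_θ`. -/
def IsAlephFixedPoint (θ : Cardinal.{0}) : Prop := Cardinal.aleph θ.ord = θ

/-- `θ` is a singular cardinal: infinite with `cf θ < θ`. -/
def IsSingular (θ : Cardinal.{0}) : Prop := ℵ₀ ≤ θ ∧ θ.ord.cof < θ

/-- `κ` is weakly inaccessible: a regular uncountable limit cardinal. -/
def WeaklyInaccessible (κ : Cardinal.{0}) : Prop := ℵ₀ < κ ∧ κ.IsRegular ∧ IsLimitCard κ

/-- `κ` is a successor cardinal. -/
def IsSuccCard (κ : Cardinal.{0}) : Prop := ∃ ν, κ = Order.succ ν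

/-- An `ℱ^I_{κ,λ}(σ⁺,π)`-sequence: a `(σ⁺,λ,π)`-sequence `⟨y_β : β < π⟩` together with
functions `f_β : σ → λ` (for `λ ≤ β < π`) with `y_β = ran f_β`, such that every
`e ⊆ π \ λ` of cardinality `κ` has a subset `b` of cardinality `κ` and a `g : b → I` with
`f_α(i) ≠ f_β(i)` whenever `α < β` are in `b` and `i ∈ σ \ (g(α) ∪ g(β))`. -/
def FSeq (κ lam π σ : Cardinal.{0}) (I : Set (Set Ordinal))
    (y : Ordinal → Set Ordinal) : Prop :=
  IsTLPSeq (Order.succ σ) lam π y ∧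
  ∃ f : Ordinal → Ordinal → Ordinal,
    (∀ β, lam.ord ≤ β → β < π.ord →
      (∀ i < σ.ord, f β i < lam.ord) ∧ y β = f β '' Set.Iio σ.ord) ∧
    ∀ e : Set Ordinal, e ⊆ {β | lam.ord ≤ β ∧ β < π.ord} → #e = Cardinal.lift.{1} κ →
      ∃ b ⊆ e, #b = Cardinal.lift.{1} κ ∧ ∃ g : Ordinal → Set Ordinal,
        (∀ α ∈ b, g α ∈ I) ∧
        ∀ α ∈ b, ∀ β ∈ b, α < β →
          ∀ i < σ.ord, i ∉ g α → i ∉ g β → f α i ≠ f β i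

end Paper

/-!
The isomorphism is `a ↦ {β < σ : y_β ⊆ a}` for an `𝒜_{κ,λ}(μ, u(κ,λ))`-sequence `⃗y`, restricted
to `P_κ(λ)`; the `𝒜` property says exactly that it lands in `P_κ(σ)`. Since `y_β = {β}` for
`β < λ`, it is an order embedding. Since every `y_β` has fewer than `μ = cf μ` elements, it
commutes with unions of increasing `μ`-sequences. Every `b ∈ P_κ(σ)` lies below the image of
`⋃_{β ∈ b} y_β ∈ P_κ(λ)`. Hence the map sends `μ`-clubs of `P_κ(λ)` to `μ`-clubs of `P_κ(σ)`,
and `μ`-clubs of `P_κ(σ)` inside its range pull back to `μ`-clubs of `P_κ(λ)`.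
-/

namespace Paper

lemma exists_lt_ord_subset_of_subset_biUnion {α : Type*} {μ : Cardinal.{0}}
    (hμ : μ.IsRegular) {t : Set α} (ht : #t < Cardinal.lift μ)
    {s : Ordinal.{0} → Set α} (hs : ∀ i j, i < j → j < μ.ord → s i ⊂ s j)
    (hts : t ⊆ ⋃ i ∈ Iio μ.ord, s i) : ∃ j < μ.ord, t ⊆ s j := by
  choose g hgμ hgs using fun x : t => mem_iUnion₂.1 (hts x.2)
  have hsup : ⨆ x, g x < μ.ord := by
    refine Ordinal.lift_iSup_lt_of_lt_cof ?_ hgμ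
    rwa [← Ordinal.lift_cof, hμ.cof_ord, lift_uzero]
  have hbdd : BddAbove (range g) := ⟨μ.ord, by rintro _ ⟨x, rfl⟩; exact (hgμ x).le⟩
  refine ⟨_, hsup, fun x hx => ?_⟩
  rcases (le_ciSup hbdd ⟨x, hx⟩).eq_or_lt with heq | hlt
  · exact heq ▸ hgs ⟨x, hx⟩
  · exact (hs _ _ hlt hsup).subset (hgs ⟨x, hx⟩)

lemma biUnion_mem_Pk {κ ρ : Cardinal.{0}} (hκ : κ.IsRegular) {b : Set Ordinal}
    (hb : #b < Cardinal.lift.{1} κ) {s : Ordinal → Set Ordinal} (hs : ∀ i ∈ b, s i ∈ Pk κ ρ) :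
    (⋃ i ∈ b, s i) ∈ Pk κ ρ := by
  refine ⟨fun x hx => ?_, ?_⟩
  · obtain ⟨i, hi, hxi⟩ := mem_iUnion₂.1 hx
    exact (hs i hi).1 x hxi
  · exact (card_biUnion_lt_iff_forall_of_isRegular hκ.lift hb).2 fun i hi => (hs i hi).2

lemma biUnion_Iio_mem_Pk {μ κ ρ : Cardinal.{0}} (hμκ : μ < κ) (hκ : κ.IsRegular)
    {s : Ordinal → Set Ordinal} (hs : ∀ i < μ.ord, s i ∈ Pk κ ρ) :
    (⋃ i ∈ Iio μ.ord, s i) ∈ Pk κ ρ := by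
  refine biUnion_mem_Pk hκ ?_ hs
  rwa [mk_Iio_ordinal, card_ord, lift_lt]

lemma muClub_Pk {μ κ ρ : Cardinal.{0}} (hμκ : μ < κ) (hκ : κ.IsRegular) :
    MuClub μ κ ρ (Pk κ ρ) :=
  ⟨subset_rfl, fun _ hs _ => biUnion_Iio_mem_Pk hμκ hκ hs, fun a ha => ⟨a, ha, subset_rfl⟩⟩

lemma mem_dualOn_NmuS_iff {μ κ ρ : Cardinal.{0}} {D : Set (Set Ordinal)} :
    D ∈ dualOn (Pk κ ρ) (NmuS μ κ ρ) ↔ D ⊆ Pk κ ρ ∧ ∃ C, MuClub μ κ ρ C ∧ C ⊆ D := by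
  refine and_congr_right fun _ => ⟨fun ⟨_, C, hC, hCD⟩ => ⟨C, hC, ?_⟩, fun ⟨C, hC, hCD⟩ =>
    ⟨sdiff_subset, C, hC, ?_⟩⟩
  · intro c hc
    by_contra hcD
    exact (eq_empty_iff_forall_notMem.1 hCD) c ⟨⟨hC.1 hc, hcD⟩, hc⟩
  · exact eq_empty_iff_forall_notMem.2 fun c ⟨⟨_, hcD⟩, hc⟩ => hcD (hCD hc)

section fSeq

variable {μ κ lam σ π : Cardinal.{0}} {y : Ordinal → Set Ordinal}

lemma fSeq_mono {a b : Set Ordinal} (hab : a ⊆ b) : fSeq π y a ⊆ fSeq π y b :=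
  fun _ hβ => ⟨hβ.1, hβ.2.trans hab⟩

lemma fSeq_subset_fSeq_iff (hy : ∀ β < lam.ord, y β = {β}) (hls : lam ≤ σ)
    {a b : Set Ordinal} (ha : ∀ x ∈ a, x < lam.ord) :
    fSeq σ y a ⊆ fSeq σ y b ↔ a ⊆ b := by
  refine ⟨fun h x hx => ?_, fSeq_mono⟩
  have hxa : x ∈ fSeq σ y a :=
    ⟨(ha x hx).trans_le (ord_le_ord.2 hls), (hy x (ha x hx)).symm ▸ singleton_subset_iff.2 hx⟩
  simpa [hy x (ha x hx)] using (h hxa).2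

lemma fSeq_ssubset_fSeq_iff (hy : ∀ β < lam.ord, y β = {β}) (hls : lam ≤ σ)
    {a b : Set Ordinal} (ha : ∀ x ∈ a, x < lam.ord) (hb : ∀ x ∈ b, x < lam.ord) :
    fSeq σ y a ⊂ fSeq σ y b ↔ a ⊂ b := by
  simp only [ssubset_iff_subset_not_subset, fSeq_subset_fSeq_iff hy hls ha,
    fSeq_subset_fSeq_iff hy hls hb]

lemma injOn_fSeq (hy : ∀ β < lam.ord, y β = {β}) (hls : lam ≤ σ) :
    InjOn (fSeq σ y) (Pk κ lam) := fun _ ha _ hb hab =>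
  ((fSeq_subset_fSeq_iff hy hls ha.1).1 hab.le).antisymm
    ((fSeq_subset_fSeq_iff hy hls hb.1).1 hab.ge)

lemma fSeq_biUnion_Iio (hμ : μ.IsRegular) (hy : ∀ β < σ.ord, #(y β) < Cardinal.lift.{1} μ)
    {s : Ordinal → Set Ordinal} (hs : ∀ i j, i < j → j < μ.ord → s i ⊂ s j) :
    fSeq σ y (⋃ i ∈ Iio μ.ord, s i) = ⋃ i ∈ Iio μ.ord, fSeq σ y (s i) := by
  refine (Subset.antisymm ?_ (iUnion₂_subset fun i hi => fSeq_mono (subset_biUnion_of_mem hi)))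
  rintro β ⟨hβσ, hβs⟩
  obtain ⟨j, hj, hβj⟩ := exists_lt_ord_subset_of_subset_biUnion hμ (hy β hβσ) hs hβs
  exact mem_biUnion hj ⟨hβσ, hβj⟩

lemma fSeq_mem_Pk (hy : ASeq κ lam μ π y) (hσπ : σ ≤ π) {a : Set Ordinal}
    (ha : a ∈ Pk κ lam) : fSeq σ y a ∈ Pk κ σ :=
  ⟨fun _ hβ => hβ.1, (mk_le_mk_of_subset (t := fSeq π y a) fun _ hβ =>
    ⟨hβ.1.trans_le (ord_le_ord.2 hσπ), hβ.2⟩).trans_lt (hy.2 a ha)⟩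

lemma ASeq.mem_Pk (hy : ASeq κ lam μ π y) (hσπ : σ ≤ π) {β : Ordinal} (hβ : β < σ.ord) :
    y β ∈ Pk μ lam :=
  hy.1.1 β (hβ.trans_le (ord_le_ord.2 hσπ))

lemma MuClub.image_fSeq (hμ : μ.IsRegular) (hμκ : μ < κ) (hκ : κ.IsRegular)
    (hy : ASeq κ lam μ π y) (hls : lam ≤ σ) (hσπ : σ ≤ π) {C : Set (Set Ordinal)}
    (hC : MuClub μ κ lam C) : MuClub μ κ σ (fSeq σ y '' C) := by
  refine ⟨image_subset_iff.2 fun c hc => fSeq_mem_Pk hy hσπ (hC.1 hc), fun s hsC hs => ?_,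
    fun b hb => ?_⟩
  · set c := fun i => Function.invFunOn (fSeq σ y) C (s i)
    have hcC : ∀ i < μ.ord, c i ∈ C := fun i hi => Function.invFunOn_mem (hsC i hi)
    have hcs : ∀ i < μ.ord, fSeq σ y (c i) = s i := fun i hi => Function.invFunOn_eq (hsC i hi)
    have hc : ∀ i j, i < j → j < μ.ord → c i ⊂ c j := fun i j hij hj => by
      rw [← fSeq_ssubset_fSeq_iff hy.1.2.1 hls (hC.1 (hcC i (hij.trans hj))).1
        (hC.1 (hcC j hj)).1, hcs i (hij.trans hj), hcs j hj]
      exact hs i j hij hj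
    refine ⟨_, hC.2.1 c hcC hc, ?_⟩
    rw [fSeq_biUnion_Iio hμ (fun β hβ => (hy.mem_Pk hσπ hβ).2) hc]
    exact iUnion₂_congr fun i hi => hcs i hi
  · have hyb : (⋃ β ∈ b, y β) ∈ Pk κ lam := biUnion_mem_Pk hκ hb.2 fun β hβ =>
      have hyβ := hy.mem_Pk hσπ (hb.1 β hβ)
      ⟨hyβ.1, hyβ.2.trans (lift_lt.2 hμκ)⟩
    obtain ⟨c, hc, hyc⟩ := hC.2.2 _ hyb
    exact ⟨_, mem_image_of_mem _ hc, fun β hβ =>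
      ⟨hb.1 β hβ, (subset_biUnion_of_mem hβ).trans hyc⟩⟩

lemma MuClub.preimage_fSeq (hμ : μ.IsRegular) (hμκ : μ < κ) (hκ : κ.IsRegular)
    (hy : ASeq κ lam μ π y) (hls : lam ≤ σ) (hσπ : σ ≤ π) {C : Set (Set Ordinal)}
    (hC : MuClub μ κ σ C) (hCk : C ⊆ fSeq σ y '' Pk κ lam) :
    MuClub μ κ lam (Pk κ lam ∩ fSeq σ y ⁻¹' C) := by
  refine ⟨inter_subset_left, fun s hsC hs =>
    ⟨biUnion_Iio_mem_Pk hμκ hκ fun i hi => (hsC i hi).1, ?_⟩, fun a ha => ?_⟩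
  · rw [mem_preimage, fSeq_biUnion_Iio hμ (fun β hβ => (hy.mem_Pk hσπ hβ).2) hs]
    refine hC.2.1 _ (fun i hi => (hsC i hi).2) fun i j hij hj => ?_
    exact (fSeq_ssubset_fSeq_iff hy.1.2.1 hls (hsC i (hij.trans hj)).1.1
      (hsC j hj).1.1).2 (hs i j hij hj)
  · obtain ⟨c, hc, hac⟩ := hC.2.2 _ (fSeq_mem_Pk hy hσπ ha)
    obtain ⟨d, hd, rfl⟩ := hCk hc
    exact ⟨d, ⟨hd, hc⟩, (fSeq_subset_fSeq_iff hy.1.2.1 hls ha.1).1 hac⟩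

lemma mem_dualOn_NmuS_iff_image_fSeq (hμ : μ.IsRegular) (hμκ : μ < κ) (hκ : κ.IsRegular)
    (hy : ASeq κ lam μ π y) (hls : lam ≤ σ) (hσπ : σ ≤ π) {D : Set (Set Ordinal)}
    (hD : D ⊆ Pk κ lam) :
    D ∈ dualOn (Pk κ lam) (NmuS μ κ lam) ↔
      fSeq σ y '' D ∈ dualOn (Pk κ σ) (NmuS μ κ σ) := by
  simp only [mem_dualOn_NmuS_iff, hD, true_and]
  constructor
  · rintro ⟨C, hC, hCD⟩
    exact ⟨image_subset_iff.2 fun a ha => fSeq_mem_Pk hy hσπ (hD ha), _,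
      hC.image_fSeq hμ hμκ hκ hy hls hσπ, image_mono hCD⟩
  · rintro ⟨-, C, hC, hCD⟩
    refine ⟨_, hC.preimage_fSeq hμ hμκ hκ hy hls hσπ (hCD.trans (image_mono hD)), ?_⟩
    rintro a ⟨ha, haC⟩
    obtain ⟨d, hd, hda⟩ := hCD haC
    rwa [← injOn_fSeq hy.1.2.1 hls (hD hd) ha hda]

end fSeq

end Paper

open Paper

theorem statement4_general (μ κ lam σ : Cardinal)
    (hμreg : μ.IsRegular) (hμκ : μ < κ) (hκreg : κ.IsRegular)
    (hls : lam ≤ σ) (hsu : σ ≤ uu κ lam)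
    (hA : A κ lam μ (uu κ lam)) :
    IdealIso (Pk κ lam) (NmuS μ κ lam) (Pk κ σ) (NmuS μ κ σ) := by
  obtain ⟨y, hy⟩ := hA
  have hPk : Pk κ lam ∈ dualOn (Pk κ lam) (NmuS μ κ lam) :=
    mem_dualOn_NmuS_iff.2 ⟨subset_rfl, _, muClub_Pk hμκ hκreg, subset_rfl⟩
  have hiff := fun D (hD : D ⊆ Pk κ lam) =>
    mem_dualOn_NmuS_iff_image_fSeq hμreg hμκ hκreg hy hls hsu hD
  exact ⟨_, hPk, _, (hiff _ subset_rfl).1 hPk, fSeq σ y,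
    (injOn_fSeq hy.1.2.1 hls).bijOn_image, hiff⟩

theorem statement4 (μ κ lam σ : Cardinal)
    (hμ : ℵ₀ ≤ μ) (hκ : ℵ₀ ≤ κ) (hlam : ℵ₀ ≤ lam) (hσ : ℵ₀ ≤ σ)
    (hcf : lam.ord.cof < μ) (hμreg : μ.IsRegular) (hμκ : μ < κ) (hκreg : κ.IsRegular)
    (hkl : κ < lam) (hls : lam ≤ σ) (hsu : σ ≤ uu κ lam)
    (hA : A κ lam μ (uu κ lam)) :
    IdealIso (Pk κ lam) (NmuS μ κ lam) (Pk κ σ) (NmuS μ κ σ) :=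
  statement4_general μ κ lam σ hμreg hμκ hκreg hls hsu hA
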